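/- Let n be a positive integer. The group SL(2, ℤ/nℤ) acts transitively on the set of elements of additive order n in (ℤ/nℤ)²: if v and w both have additive order n in (ℤ/nℤ)², then there exists M in SL(2, ℤ/nℤ) with M·v = w. -/
import Mathlib

private lemma bezout_of_addOrderOf_eq (n : ℕ) (hn : 0 < n) (v : Fin 2 → ZMod n) (hv : addOrderOf v = n) :
    ∃ x y : ZMod n, x * v 0 + y * v 1 = 1 := by
  have : NeZero n := ⟨hn.ne'⟩
  set a := (v 0).val
  set b := (v 1).val
  set d := Nat.gcd (Nat.gcd a b) n with hd
  have hdn : d ∣ n := Nat.gcd_dvd_right _ _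
  have hd1 : d = 1 := by
    by_contra h
    have hdpos : 0 < d := Nat.pos_of_dvd_of_pos hdn hn
    have h2 : 2 ≤ d := by omega
    have hlt : n / d < n := Nat.div_lt_self hn h2
    have hpos : 0 < n / d := Nat.div_pos (Nat.le_of_dvd hn hdn) hdpos
    have hzero : (n / d) • v = 0 := by
      funext i
      have hda : d ∣ (v i).val := by
        fin_cases i
        · exact (Nat.gcd_dvd_left _ _).trans (Nat.gcd_dvd_left a b)
        · exact (Nat.gcd_dvd_left _ _).trans (Nat.gcd_dvd_right a b)
      have : (n : ℕ) ∣ (n / d) * (v i).val := by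
        obtain ⟨k, hk⟩ := hda
        refine ⟨k, ?_⟩
        rw [hk, ← mul_assoc, Nat.div_mul_cancel hdn]
      have : ((n / d : ℕ) : ZMod n) * v i = 0 := by
        calc ((n/d : ℕ) : ZMod n) * v i = (((n/d) * (v i).val : ℕ) : ZMod n) := by
              push_cast [ZMod.natCast_val, ZMod.cast_id]; ring
          _ = 0 := by rwa [ZMod.natCast_eq_zero_iff]
      simpa [nsmul_eq_mul] using this
    have := addOrderOf_dvd_of_nsmul_eq_zero hzero
    rw [hv] at this
    exact absurd (Nat.le_of_dvd hpos this) (by omega)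
  -- Bezout
  have hg : Nat.gcd a b % n = d % n ∨ True := Or.inr trivial
  have hcop : IsCoprime ((Nat.gcd a b : ℤ)) (n : ℤ) := by
    rw [Int.isCoprime_iff_gcd_eq_one]
    simpa [Int.gcd_natCast_natCast] using hd1
  obtain ⟨u, z, huz⟩ := hcop
  -- gcd a b = x*a + y*b over ℤ
  have hbez : (Nat.gcd a b : ℤ) = a * Nat.gcdA a b + b * Nat.gcdB a b := Nat.gcd_eq_gcd_ab a b
  refine ⟨(u * Nat.gcdA a b : ℤ), (u * Nat.gcdB a b : ℤ), ?_⟩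
  have hv0 : ((a : ℤ) : ZMod n) = v 0 := by simp [a, ZMod.natCast_val, ZMod.cast_id]
  have hv1 : ((b : ℤ) : ZMod n) = v 1 := by simp [b, ZMod.natCast_val, ZMod.cast_id]
  have := congrArg (fun t : ℤ => (t : ZMod n)) huz
  simp only [Int.cast_add, Int.cast_mul, Int.cast_natCast, ZMod.natCast_self, mul_zero, add_zero, Int.cast_one] at this
  calc ((u * Nat.gcdA a b : ℤ) : ZMod n) * v 0 + ((u * Nat.gcdB a b : ℤ) : ZMod n) * v 1
      = ((u * (a * Nat.gcdA a b + b * Nat.gcdB a b) : ℤ) : ZMod n) := by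
        rw [← hv0, ← hv1]; push_cast; ring
    _ = ((u * Nat.gcd a b : ℤ) : ZMod n) := by rw [← hbez]
    _ = 1 := by push_cast at this ⊢; exact this

lemma exists_SL2_mulVec_eq (n : ℕ) (hn : 0 < n) (v : Fin 2 → ZMod n) (hv : addOrderOf v = n) :
    ∃ M : Matrix.SpecialLinearGroup (Fin 2) (ZMod n),
      (M : Matrix (Fin 2) (Fin 2) (ZMod n)).mulVec ![1, 0] = v := by
  have hbez : ∃ x y : ZMod n, x * v 0 + y * v 1 = 1 := bezout_of_addOrderOf_eq n hn v hv
  obtain ⟨x, y, hxy⟩ := hbez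
  refine ⟨⟨!![v 0, -y; v 1, x], ?_⟩, ?_⟩
  · rw [Matrix.det_fin_two_of]; ring_nf; linear_combination hxy
  · funext i
    fin_cases i <;> simp [Matrix.mulVec, dotProduct, Fin.sum_univ_two]

/-- `SL(2, ℤ/nℤ)` acts transitively on the elements of additive order `n` in `(ℤ/nℤ)²`. -/
theorem SL2_transitive_on_order_n_vectors (n : ℕ) (hn : 0 < n)
    (v w : Fin 2 → ZMod n) (hv : addOrderOf v = n) (hw : addOrderOf w = n) :
    ∃ M : Matrix.SpecialLinearGroup (Fin 2) (ZMod n),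
      (M : Matrix (Fin 2) (Fin 2) (ZMod n)).mulVec v = w := by
  obtain ⟨Mv, hMv⟩ := exists_SL2_mulVec_eq n hn v hv
  obtain ⟨Mw, hMw⟩ := exists_SL2_mulVec_eq n hn w hw
  refine ⟨Mw * Mv⁻¹, ?_⟩
  have key : ((Mw * Mv⁻¹ : Matrix.SpecialLinearGroup (Fin 2) (ZMod n)) : Matrix (Fin 2) (Fin 2) (ZMod n)) * Mv = Mw := by
    have hadj : (Mv : Matrix (Fin 2) (Fin 2) (ZMod n)).adjugate * Mv = 1 := by
      rw [Matrix.adjugate_mul, Mv.2, one_smul]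
    simp only [Matrix.SpecialLinearGroup.coe_mul, Matrix.coe_units_inv,
      Matrix.SpecialLinearGroup.coe_inv]
    rw [mul_assoc, hadj, mul_one]
  rw [← hMv, Matrix.mulVec_mulVec, key, hMw]
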